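/- arXiv:2312.10203 — 5 statements merged into one kernel-verified Lean document; each statement's English description precedes it below -/
import Mathlib

section
/- Let V : [0,∞) → ℝ_{≥0} be a differentiable function satisfying V'(t) ≤ -a·V(t)^p - b·V(t)^q for all t with V(t) > 0, where a, b > 0, 0 < p < 1 < q. Then V(t) = 0 for all t ≥ T_max, where T_max = 1/(a(1-p)) + 1/(b(q-1)), regardless of the initial value V(0). -/
/-!
Along a positive solution, `V ^ (1 - q)` grows at rate at least `b (q - 1)` and `V ^ (1 - p)`
decays at rate at least `a (1 - p)`. The first fact forces `V < 1` after time `1 / (b (q - 1))`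
whatever `V 0` is; from a value below `1`, the second fact leaves `V` positive for less than
`1 / (a (1 - p))` further time.
-/

open Set

theorem image_sub_le_mul_sub_of_hasDerivAt_le {f f' : ℝ → ℝ} {C s t : ℝ} (hst : s ≤ t)
    (hf : ∀ u ∈ Icc s t, HasDerivAt f (f' u) u) (hf' : ∀ u ∈ Icc s t, f' u ≤ C) :
    f t - f s ≤ C * (t - s) :=
  (convex_Icc s t).image_sub_le_mul_sub_of_deriv_le
    (fun u hu => (hf u hu).continuousAt.continuousWithinAt)
    (fun u hu => (hf u (interior_subset hu)).differentiableAt.differentiableWithinAt)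
    (fun u hu => (hf u (interior_subset hu)).deriv ▸ hf' u (interior_subset hu))
    s (left_mem_Icc.2 hst) t (right_mem_Icc.2 hst) hst

theorem mul_sub_le_image_sub_of_le_hasDerivAt {f f' : ℝ → ℝ} {C s t : ℝ} (hst : s ≤ t)
    (hf : ∀ u ∈ Icc s t, HasDerivAt f (f' u) u) (hf' : ∀ u ∈ Icc s t, C ≤ f' u) :
    C * (t - s) ≤ f t - f s :=
  (convex_Icc s t).mul_sub_le_image_sub_of_le_deriv
    (fun u hu => (hf u hu).continuousAt.continuousWithinAt)
    (fun u hu => (hf u (interior_subset hu)).differentiableAt.differentiableWithinAt)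
    (fun u hu => (hf u (interior_subset hu)).deriv ▸ hf' u (interior_subset hu))
    s (left_mem_Icc.2 hst) t (right_mem_Icc.2 hst) hst

theorem mul_rpow_neg_le_of_le {a b p q x y : ℝ} (hx : 0 < x)
    (hy : y ≤ -a * x ^ p - b * x ^ q) (r : ℝ) :
    y * x ^ (-r) ≤ -a * x ^ (p - r) - b * x ^ (q - r) := by
  have hxr : 0 < x ^ (-r) := Real.rpow_pos_of_pos hx _
  calc y * x ^ (-r) ≤ (-a * x ^ p - b * x ^ q) * x ^ (-r) :=
        mul_le_mul_of_nonneg_right hy hxr.le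
    _ = -a * x ^ (p - r) - b * x ^ (q - r) := by
        simp only [sub_eq_add_neg _ r, Real.rpow_add hx]; ring

section Phases

variable {a b p q s t : ℝ} {V V' : ℝ → ℝ}
  (hderiv : ∀ u ∈ Icc s t, HasDerivAt V (V' u) u) (hpos : ∀ u ∈ Icc s t, 0 < V u)
  (hineq : ∀ u ∈ Icc s t, V' u ≤ -a * V u ^ p - b * V u ^ q)
include hderiv hpos hineq

theorem rpow_one_sub_le_sub_of_pos_on_Icc (hb : 0 ≤ b) (hp : p < 1) (hst : s ≤ t) :
    V t ^ (1 - p) ≤ V s ^ (1 - p) - a * (1 - p) * (t - s) := by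
  have hderiv' : ∀ u ∈ Icc s t,
      HasDerivAt (fun y => V y ^ (1 - p)) (V' u * (1 - p) * V u ^ (-p)) u := fun u hu => by
    simpa using (hderiv u hu).rpow_const (p := 1 - p) (Or.inl (hpos u hu).ne')
  have hrate : ∀ u ∈ Icc s t, V' u * (1 - p) * V u ^ (-p) ≤ -(a * (1 - p)) := fun u hu => by
    have h := mul_rpow_neg_le_of_le (hpos u hu) (hineq u hu) p
    rw [sub_self, Real.rpow_zero] at h
    have hb' : 0 ≤ b * V u ^ (q - p) := mul_nonneg hb (Real.rpow_nonneg (hpos u hu).le _)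
    nlinarith
  linarith [image_sub_le_mul_sub_of_hasDerivAt_le hst hderiv' hrate]

theorem rpow_one_sub_add_le_of_pos_on_Icc (ha : 0 ≤ a) (hq : 1 < q) (hst : s ≤ t) :
    V s ^ (1 - q) + b * (q - 1) * (t - s) ≤ V t ^ (1 - q) := by
  have hderiv' : ∀ u ∈ Icc s t,
      HasDerivAt (fun y => V y ^ (1 - q)) (V' u * (1 - q) * V u ^ (-q)) u := fun u hu => by
    simpa using (hderiv u hu).rpow_const (p := 1 - q) (Or.inl (hpos u hu).ne')
  have hrate : ∀ u ∈ Icc s t, b * (q - 1) ≤ V' u * (1 - q) * V u ^ (-q) := fun u hu => by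
    have h := mul_rpow_neg_le_of_le (hpos u hu) (hineq u hu) q
    rw [sub_self, Real.rpow_zero] at h
    have ha' : 0 ≤ a * V u ^ (p - q) := mul_nonneg ha (Real.rpow_nonneg (hpos u hu).le _)
    nlinarith
  linarith [mul_sub_le_image_sub_of_le_hasDerivAt hst hderiv' hrate]

theorem lt_one_of_pos_on_Icc (ha : 0 ≤ a) (hb : 0 < b) (hq : 1 < q)
    (hst : 1 / (b * (q - 1)) ≤ t - s) : V t < 1 := by
  have hs : s ∈ Icc s t :=
    left_mem_Icc.2 (by linarith [one_div_pos.2 (mul_pos hb (sub_pos.2 hq))])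
  have hgrowth := rpow_one_sub_add_le_of_pos_on_Icc hderiv hpos hineq ha hq hs.2
  have hlen : 1 ≤ b * (q - 1) * (t - s) := by
    rwa [div_le_iff₀' (mul_pos hb (sub_pos.2 hq))] at hst
  have hlarge : 1 < V t ^ (1 - q) := by
    linarith [Real.rpow_pos_of_pos (hpos s hs) (1 - q)]
  rcases (Real.one_lt_rpow_iff_of_pos (hpos t (right_mem_Icc.2 hs.2))).1 hlarge with h | h
  · linarith [h.2]
  · exact h.1

theorem one_lt_of_pos_on_Icc (ha : 0 < a) (hb : 0 ≤ b) (hp : p < 1)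
    (hst : 1 / (a * (1 - p)) ≤ t - s) : 1 < V s := by
  have ht : t ∈ Icc s t :=
    right_mem_Icc.2 (by linarith [one_div_pos.2 (mul_pos ha (sub_pos.2 hp))])
  have hdecay := rpow_one_sub_le_sub_of_pos_on_Icc hderiv hpos hineq hb hp ht.1
  have hlen : 1 ≤ a * (1 - p) * (t - s) := by
    rwa [div_le_iff₀' (mul_pos ha (sub_pos.2 hp))] at hst
  have hlarge : 1 < V s ^ (1 - p) := by
    linarith [Real.rpow_pos_of_pos (hpos t ht) (1 - p)]
  by_contra! hs
  linarith [Real.rpow_le_one (hpos s (left_mem_Icc.2 ht.1)).le hs (sub_pos.2 hp).le]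

end Phases

theorem fixed_time_convergence_general {a b p q : ℝ} (ha : 0 < a) (hb : 0 < b)
    (hp1 : p < 1) (hq : 1 < q) (V V' : ℝ → ℝ)
    (hderiv : ∀ t, 0 ≤ t → HasDerivAt V (V' t) t)
    (hnonneg : ∀ t, 0 ≤ t → 0 ≤ V t)
    (hmono : ∀ s t, 0 ≤ s → s ≤ t → V t ≤ V s)
    (hineq : ∀ t, 0 ≤ t → 0 < V t → V' t ≤ -a * V t ^ p - b * V t ^ q) :
    ∀ t, 1 / (a * (1 - p)) + 1 / (b * (q - 1)) ≤ t → V t = 0 := by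
  set T₁ := 1 / (b * (q - 1))
  set T := 1 / (a * (1 - p)) + T₁
  have hT₁ : 0 ≤ T₁ := (one_div_pos.2 (mul_pos hb (sub_pos.2 hq))).le
  have hT : T₁ ≤ T := le_add_of_nonneg_left (one_div_pos.2 (mul_pos ha (sub_pos.2 hp1))).le
  have hVT : V T = 0 := by
    by_contra hne
    have hpos : ∀ u ∈ Icc 0 T, 0 < V u := fun u hu =>
      ((hnonneg T (hT₁.trans hT)).lt_of_ne' hne).trans_le (hmono u T hu.1 hu.2)
    have hfirst : Icc 0 T₁ ⊆ Icc 0 T := Icc_subset_Icc_right hT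
    have hsecond : Icc T₁ T ⊆ Icc 0 T := Icc_subset_Icc_left hT₁
    have hbelow : V T₁ < 1 :=
      lt_one_of_pos_on_Icc (fun u hu => hderiv u (hfirst hu).1) (fun u hu => hpos u (hfirst hu))
        (fun u hu => hineq u (hfirst hu).1 (hpos u (hfirst hu))) ha.le hb hq (sub_zero T₁).ge
    have habove : 1 < V T₁ :=
      one_lt_of_pos_on_Icc (fun u hu => hderiv u (hsecond hu).1) (fun u hu => hpos u (hsecond hu))
        (fun u hu => hineq u (hsecond hu).1 (hpos u (hsecond hu))) ha hb.le hp1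
        (add_sub_cancel_right _ T₁).ge
    exact hbelow.not_gt habove
  intro t ht
  exact le_antisymm (hVT ▸ hmono T t (hT₁.trans hT) ht) (hnonneg t (hT₁.trans (hT.trans ht)))

/-- Fixed-time stability (Polyakov, Lemma 2): if the nonnegative, nonincreasing,
differentiable function `V` satisfies `V' t ≤ -a * V t ^ p - b * V t ^ q` whenever
`V t > 0`, with `a, b > 0`, `0 < p < 1 < q`, then `V t = 0` for all
`t ≥ 1/(a(1-p)) + 1/(b(q-1))`, regardless of `V 0`. -/
theorem fixed_time_convergence {a b p q : ℝ} (ha : 0 < a) (hb : 0 < b)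
    (hp0 : 0 < p) (hp1 : p < 1) (hq : 1 < q) (V V' : ℝ → ℝ)
    (hderiv : ∀ t, 0 ≤ t → HasDerivAt V (V' t) t)
    (hnonneg : ∀ t, 0 ≤ t → 0 ≤ V t)
    (hmono : ∀ s t, 0 ≤ s → s ≤ t → V t ≤ V s)
    (hineq : ∀ t, 0 ≤ t → 0 < V t → V' t ≤ -a * V t ^ p - b * V t ^ q) :
    ∀ t, 1 / (a * (1 - p)) + 1 / (b * (q - 1)) ≤ t → V t = 0 :=
  fixed_time_convergence_general ha hb hp1 hq V V' hderiv hnonneg hmono hineq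
end

section
/- Let V : [0,∞) → ℝ_{≥0} be differentiable with V'(t) ≤ -c·V(t)^{1-γ/2} whenever V(t) > 0, where c > 0 and γ ∈ (0,1). Then V(t) = 0 for all t ≥ T where T = V(0)^{γ/2}·2/(c·γ) (finite-time convergence with settling time depending on the initial condition). -/
/-!
Along any stretch where `V > 0`, the chain rule and the differential inequality give
`(V ^ (γ/2))' = (γ/2) V ^ (γ/2 - 1) V' ≤ -c γ / 2`, so `V ^ (γ/2) + (c γ / 2) t` is nonincreasing.
If `V t > 0`, then by monotonicity `V > 0` on all of `[0, t]`, hence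
`0 < V t ^ (γ/2) ≤ V 0 ^ (γ/2) - (c γ / 2) t`, which forces `t < V 0 ^ (γ/2) * 2 / (c γ)`.
-/

open Set

lemma mul_rpow_sub_one_le_of_le_neg_mul_rpow {v v' c p : ℝ} (hv : 0 < v) (hp : 0 ≤ p)
    (h : v' ≤ -c * v ^ (1 - p)) : v' * p * v ^ (p - 1) ≤ -(c * p) := by
  have hcancel : v ^ (1 - p) * v ^ (p - 1) = 1 := by
    rw [← Real.rpow_add hv]
    norm_num
  calc v' * p * v ^ (p - 1) ≤ -c * v ^ (1 - p) * p * v ^ (p - 1) := by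
        gcongr
    _ = -(c * p) := by linear_combination (-c * p) * hcancel

lemma antitoneOn_rpow_add_mul_of_deriv_le {V V' : ℝ → ℝ} {D : Set ℝ} {c p : ℝ}
    (hD : Convex ℝ D) (hp : 0 ≤ p) (hderiv : ∀ s ∈ D, HasDerivAt V (V' s) s)
    (hpos : ∀ s ∈ D, 0 < V s) (hineq : ∀ s ∈ D, V' s ≤ -c * V s ^ (1 - p)) :
    AntitoneOn (fun s ↦ V s ^ p + c * p * s) D := by
  have hderiv' : ∀ s ∈ D,
      HasDerivAt (fun s ↦ V s ^ p + c * p * s) (V' s * p * V s ^ (p - 1) + c * p) s :=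
    fun s hs ↦ ((hderiv s hs).rpow_const (Or.inl (hpos s hs).ne')).add
      ((hasDerivAt_id s).const_mul (c * p) |>.congr_deriv (mul_one _))
  refine antitoneOn_of_hasDerivWithinAt_nonpos hD
    (fun s hs ↦ (hderiv' s hs).continuousAt.continuousWithinAt)
    (fun s hs ↦ (hderiv' s (interior_subset hs)).hasDerivWithinAt) fun s hs ↦ ?_
  have hs := interior_subset hs
  linarith [mul_rpow_sub_one_le_of_le_neg_mul_rpow (hpos s hs) hp (hineq s hs)]

theorem finite_time_convergence_general {c γ : ℝ} (hc : 0 < c) (hγ0 : 0 < γ)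
    (V V' : ℝ → ℝ)
    (hderiv : ∀ t, 0 ≤ t → HasDerivAt V (V' t) t)
    (hnonneg : ∀ t, 0 ≤ t → 0 ≤ V t)
    (hmono : ∀ s t, 0 ≤ s → s ≤ t → V t ≤ V s)
    (hineq : ∀ t, 0 ≤ t → 0 < V t → V' t ≤ -c * V t ^ (1 - γ / 2)) :
    ∀ t, V 0 ^ (γ / 2) * 2 / (c * γ) ≤ t → V t = 0 := by
  intro t ht
  have hcγ : 0 < c * (γ / 2) := by positivity
  have hsettle : c * (γ / 2) * (V 0 ^ (γ / 2) * 2 / (c * γ)) = V 0 ^ (γ / 2) := by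
    field_simp
  have hV0_pow : 0 ≤ V 0 ^ (γ / 2) := Real.rpow_nonneg (hnonneg 0 le_rfl) _
  have ht0 : 0 ≤ t := le_trans (by positivity) ht
  by_contra hVt
  have hpos : ∀ s ∈ Icc 0 t, 0 < V s := fun s hs ↦
    (lt_of_le_of_ne (hnonneg t ht0) (Ne.symm hVt)).trans_le (hmono s t hs.1 hs.2)
  have hdecay := antitoneOn_rpow_add_mul_of_deriv_le (convex_Icc 0 t) (half_pos hγ0).le
    (fun s hs ↦ hderiv s hs.1) hpos (fun s hs ↦ hineq s hs.1 (hpos s hs))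
    (left_mem_Icc.2 ht0) (right_mem_Icc.2 ht0) ht0
  have hVt_pow : 0 < V t ^ (γ / 2) := Real.rpow_pos_of_pos (hpos t (right_mem_Icc.2 ht0)) _
  simp only [mul_zero, add_zero] at hdecay
  linarith [mul_le_mul_of_nonneg_left ht hcγ.le]

/-- Finite-time convergence: if the nonnegative, nonincreasing, differentiable
function `V` satisfies `V' t ≤ -c * V t ^ (1 - γ/2)` whenever `V t > 0`, with
`c > 0` and `γ ∈ (0,1)`, then `V t = 0` for all `t ≥ V 0 ^ (γ/2) * 2 / (c * γ)`. -/
theorem finite_time_convergence {c γ : ℝ} (hc : 0 < c) (hγ0 : 0 < γ) (hγ1 : γ < 1)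
    (V V' : ℝ → ℝ)
    (hderiv : ∀ t, 0 ≤ t → HasDerivAt V (V' t) t)
    (hnonneg : ∀ t, 0 ≤ t → 0 ≤ V t)
    (hmono : ∀ s t, 0 ≤ s → s ≤ t → V t ≤ V s)
    (hineq : ∀ t, 0 ≤ t → 0 < V t → V' t ≤ -c * V t ^ (1 - γ / 2)) :
    ∀ t, V 0 ^ (γ / 2) * 2 / (c * γ) ≤ t → V t = 0 :=
  finite_time_convergence_general hc hγ0 V V' hderiv hnonneg hmono hineq
end

section
/- Let J be the block matrix [[H, G],[Λ Gᵀ, D]] where H ∈ ℝ^{n×n} is symmetric positive definite, G ∈ ℝ^{n×m}, Λ = diag(λ₁,…,λₘ) with λᵢ ≥ 0, and D = diag(d₁,…,dₘ) with dᵢ ≤ 0, such that for every i either λᵢ > 0 or dᵢ < 0 (strict complementarity), and the columns of G corresponding to indices with λᵢ > 0 are linearly independent. Then the Schur complement M = D - Λ Gᵀ H⁻¹ G is invertible, and consequently J is invertible. -/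
/-!
If `M x = 0` for `M = D - Λ K` with `K = Gᵀ H⁻¹ G`, then `dᵢ xᵢ = λᵢ (K x)ᵢ` for every `i`.
Strict complementarity forces `xᵢ = 0` where `λᵢ = 0` and makes every term `xᵢ (K x)ᵢ`
nonpositive, so `(G x)ᵀ H⁻¹ (G x) = xᵀ K x ≤ 0` and hence `G x = 0`. As `x` is supported
on `{λᵢ > 0}`, `G x` is a combination of linearly independent columns, so `x = 0`.
Invertibility of `J` then follows from `det J = det H · det M`.
-/

open scoped Matrix

lemma mul_nonpos_of_mul_eq_mul {l d a b : ℝ} (hl : 0 ≤ l) (hd : d ≤ 0) (hc : 0 < l ∨ d < 0)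
    (h : d * a = l * b) : a * b ≤ 0 := by
  rcases hl.eq_or_lt with rfl | hl
  · have ha : a = 0 := by simpa [(hc.resolve_left (lt_irrefl 0)).ne] using h
    simp [ha]
  · have : l * (a * b) = d * a ^ 2 := by linear_combination a * h.symm
    nlinarith [sq_nonneg a]

namespace Matrix

variable {m n : Type*} [Fintype m]

lemma mulVec_eq_zero_of_dotProduct_transpose_mul_mul_nonpos [Fintype n] {A : Matrix n n ℝ}
    (hA : A.PosDef) (G : Matrix n m ℝ) {x : m → ℝ} (h : x ⬝ᵥ (Gᵀ * A * G) *ᵥ x ≤ 0) :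
    G *ᵥ x = 0 := by
  by_contra hGx
  have hpos := hA.dotProduct_mulVec_pos hGx
  rw [Matrix.mul_assoc, ← mulVec_mulVec, dotProduct_mulVec, vecMul_transpose,
    ← mulVec_mulVec] at h
  simp only [star_trivial] at hpos
  linarith

lemma eq_zero_of_mulVec_eq_zero_of_linearIndependent {G : Matrix n m ℝ} {p : m → Prop}
    (hG : LinearIndependent ℝ (fun i : {i // p i} => fun j => G j i.1)) {x : m → ℝ}
    (hx : ∀ i, ¬ p i → x i = 0) (hGx : G *ᵥ x = 0) : x = 0 := by
  classical
  have hG' : LinearIndepOn ℝ (fun i => Gᵀ i) (Finset.univ.filter p : Finset m) := by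
    rw [Finset.coe_filter_univ]
    exact hG
  have hsum : ∑ i ∈ Finset.univ.filter p, x i • Gᵀ i = 0 := by
    rw [Finset.sum_filter_of_ne fun i _ hi => by_contra fun hp => hi (by simp [hx i hp]),
      ← vecMul_eq_sum, vecMul_transpose, hGx]
  funext i
  by_cases hp : p i
  · exact linearIndepOn_finset_iff.mp hG' x hsum i (by simpa using hp)
  · exact hx i hp

variable [DecidableEq m]

lemma dotProduct_nonpos_of_diagonal_mulVec_eq {lam d x y : m → ℝ} (hlam : ∀ i, 0 ≤ lam i)
    (hd : ∀ i, d i ≤ 0) (hcompl : ∀ i, 0 < lam i ∨ d i < 0)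
    (h : diagonal d *ᵥ x = diagonal lam *ᵥ y) : x ⬝ᵥ y ≤ 0 :=
  Finset.sum_nonpos fun i _ => mul_nonpos_of_mul_eq_mul (hlam i) (hd i) (hcompl i) <| by
    simpa only [mulVec_diagonal] using congrFun h i

theorem det_diagonal_sub_diagonal_mul_ne_zero [Fintype n] [DecidableEq n]
    {H : Matrix n n ℝ} (hH : H.PosDef) (G : Matrix n m ℝ) {lam d : m → ℝ}
    (hlam : ∀ i, 0 ≤ lam i) (hd : ∀ i, d i ≤ 0) (hcompl : ∀ i, 0 < lam i ∨ d i < 0)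
    (hG : LinearIndependent ℝ (fun i : {i // 0 < lam i} => fun j => G j i.1)) :
    (diagonal d - diagonal lam * Gᵀ * H⁻¹ * G).det ≠ 0 := by
  intro hdet
  obtain ⟨x, hx0, hx⟩ := exists_mulVec_eq_zero_iff.mpr hdet
  have hkernel : diagonal d *ᵥ x = diagonal lam *ᵥ (Gᵀ * H⁻¹ * G) *ᵥ x := by
    rw [sub_mulVec, sub_eq_zero, Matrix.mul_assoc, Matrix.mul_assoc, ← mulVec_mulVec] at hx
    simpa only [Matrix.mul_assoc] using hx
  have hsupp : ∀ i, ¬ 0 < lam i → x i = 0 := fun i hi => by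
    have := congrFun hkernel i
    simp only [mulVec_diagonal, le_antisymm (not_lt.mp hi) (hlam i), zero_mul] at this
    exact (mul_eq_zero.mp this).resolve_left ((hcompl i).resolve_left hi).ne
  have hGx : G *ᵥ x = 0 := mulVec_eq_zero_of_dotProduct_transpose_mul_mul_nonpos hH.inv G
    (dotProduct_nonpos_of_diagonal_mulVec_eq hlam hd hcompl hkernel)
  exact hx0 (eq_zero_of_mulVec_eq_zero_of_linearIndependent hG hsupp hGx)

end Matrix

theorem schur_and_block_invertible_general {n m : ℕ}
    (H : Matrix (Fin n) (Fin n) ℝ) (hH : H.PosDef)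
    (G : Matrix (Fin n) (Fin m) ℝ) (lam d : Fin m → ℝ)
    (hlam : ∀ i, 0 ≤ lam i) (hd : ∀ i, d i ≤ 0)
    (hcompl : ∀ i, 0 < lam i ∨ d i < 0)
    (hindep : LinearIndependent ℝ (fun i : {i : Fin m // 0 < lam i} =>
      (fun j : Fin n => G j i.1))) :
    IsUnit (Matrix.diagonal d
        - Matrix.diagonal lam * Gᵀ * H⁻¹ * G).det ∧
      IsUnit (Matrix.fromBlocks H G (Matrix.diagonal lam * Gᵀ)
        (Matrix.diagonal d)).det := by
  have hM := (Matrix.det_diagonal_sub_diagonal_mul_ne_zero hH G hlam hd hcompl hindep).isUnit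
  have hHdet : IsUnit H.det := hH.det_pos.ne'.isUnit
  have : Invertible H := H.invertibleOfIsUnitDet hHdet
  refine ⟨hM, ?_⟩
  rw [Matrix.det_fromBlocks₁₁, Matrix.invOf_eq_nonsing_inv]
  exact hHdet.mul hM

/-- Lemma 2 of the paper: for the block matrix `J = [[H, G],[ΛGᵀ, D]]` with `H`
symmetric positive definite, `Λ = diag lam` with `lam ≥ 0`, `D = diag d` with
`d ≤ 0`, strict complementarity (`lam i > 0` or `d i < 0` for each `i`), and the
columns of `G` with `lam i > 0` linearly independent, the Schur complement
`M = D - Λ Gᵀ H⁻¹ G` is invertible and hence `J` is invertible. -/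
theorem schur_and_block_invertible {n m : ℕ}
    (H : Matrix (Fin n) (Fin n) ℝ) (hH : H.PosDef) (hHsymm : H.IsSymm)
    (G : Matrix (Fin n) (Fin m) ℝ) (lam d : Fin m → ℝ)
    (hlam : ∀ i, 0 ≤ lam i) (hd : ∀ i, d i ≤ 0)
    (hcompl : ∀ i, 0 < lam i ∨ d i < 0)
    (hindep : LinearIndependent ℝ (fun i : {i : Fin m // 0 < lam i} =>
      (fun j : Fin n => G j i.1))) :
    IsUnit (Matrix.diagonal d
        - Matrix.diagonal lam * Gᵀ * H⁻¹ * G).det ∧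
      IsUnit (Matrix.fromBlocks H G (Matrix.diagonal lam * Gᵀ)
        (Matrix.diagonal d)).det :=
  schur_and_block_invertible_general H hH G lam d hlam hd hcompl hindep
end

section
/- Let v, w ∈ ℝⁿ and G ∈ ℝ^{n×m}, and let λ ∈ ℝᵐ with λ ≥ 0. Define u ∈ ℝᵐ by uᵢ = [wᵢ]_{λᵢ}⁺ (the projection operator: uᵢ = wᵢ if λᵢ > 0, uᵢ = max(0, wᵢ) if λᵢ = 0). Suppose that for each i with λᵢ = 0 and wᵢ < 0 we have wᵢ = (Gᵀ v)ᵢ. Then vᵀ G (u - w) ≤ ‖Gᵀv‖², and more precisely vᵀG(u - w) = -Σ_{i : λᵢ=0, wᵢ<0} (Gᵀv)ᵢ² ≤ 0. -/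
open scoped Matrix BigOperators

open Classical in
/-- Key estimate of the Lyapunov analysis (Theorem 1): with `u i = [w i]_{λ i}⁺`
and assuming that on the discontinuity set (`λ i = 0`, `w i < 0`) the component
`w i` equals `(Gᵀ v) i`, the projection-difference term satisfies
`vᵀ G (u - w) = -∑_{i : λ i = 0, w i < 0} ((Gᵀv) i)² ≤ 0 ≤ ‖Gᵀ v‖²`. -/
theorem projection_difference_estimate {n m : ℕ}
    (v : Fin n → ℝ) (w lam : Fin m → ℝ) (G : Matrix (Fin n) (Fin m) ℝ)
    (hlam : ∀ i, 0 ≤ lam i)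
    (u : Fin m → ℝ) (hu : ∀ i, u i = if 0 < lam i then w i else max 0 (w i))
    (hdisc : ∀ i, lam i = 0 → w i < 0 → w i = (Gᵀ *ᵥ v) i) :
    v ⬝ᵥ (G *ᵥ (u - w)) =
        -∑ i, (if lam i = 0 ∧ w i < 0 then ((Gᵀ *ᵥ v) i) ^ 2 else 0) ∧
      v ⬝ᵥ (G *ᵥ (u - w)) ≤ 0 ∧
      v ⬝ᵥ (G *ᵥ (u - w)) ≤ ∑ i, ((Gᵀ *ᵥ v) i) ^ 2 := by
  have key : v ⬝ᵥ (G *ᵥ (u - w)) =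
      -∑ i, (if lam i = 0 ∧ w i < 0 then ((Gᵀ *ᵥ v) i) ^ 2 else 0) := by
    have h1 : v ⬝ᵥ (G *ᵥ (u - w)) = (Gᵀ *ᵥ v) ⬝ᵥ (u - w) := by
      rw [Matrix.dotProduct_mulVec, ← Matrix.mulVec_transpose]
    rw [h1, dotProduct, ← Finset.sum_neg_distrib]
    refine Finset.sum_congr rfl fun i _ => ?_
    by_cases h0 : lam i = 0
    · by_cases hw : w i < 0
      · rw [if_pos ⟨h0, hw⟩]
        simp only [Pi.sub_apply, hu i, h0, lt_irrefl, if_false, max_eq_left hw.le]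
        rw [← hdisc i h0 hw]; ring
      · rw [if_neg (fun h : lam i = 0 ∧ w i < 0 => hw h.2)]
        simp only [Pi.sub_apply, hu i, h0, lt_irrefl, if_false, max_eq_right (not_lt.mp hw)]
        ring
    · have hp : 0 < lam i := lt_of_le_of_ne (hlam i) (Ne.symm h0)
      simp [hu i, hp, h0]
  refine ⟨key, ?_, ?_⟩
  · rw [key]
    simp only [neg_nonpos]
    exact Finset.sum_nonneg fun i _ => by positivity
  · rw [key]
    have h1 : (0:ℝ) ≤ ∑ i, ((Gᵀ *ᵥ v) i) ^ 2 := Finset.sum_nonneg fun i _ => sq_nonneg _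
    have h2 : -∑ i, (if lam i = 0 ∧ w i < 0 then ((Gᵀ *ᵥ v) i) ^ 2 else 0) ≤ 0 := by
      simp only [neg_nonpos]
      exact Finset.sum_nonneg fun i _ => by positivity
    linarith
end

section
/- Let V : [0,∞) → ℝ_{≥0} be differentiable and satisfy V'(t) ≤ -α₁ V(t)^{1-γ₁/2} - α₂ V(t)^{1-γ₂/2} whenever V(t) > 0, where α₁, α₂ > 0, γ₁ ∈ (0,1), γ₂ < 0. Then V(t) = 0 for all t ≥ T_max, where T_max = 2/(α₁ γ₁) + 2/(α₂ |γ₂|), a bound independent of V(0). -/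
open Set

private lemma aux_ge {f f' : ℝ → ℝ} {a b c : ℝ} (hab : a ≤ b)
    (hf : ∀ t ∈ Icc a b, HasDerivAt f (f' t) t)
    (hc : ∀ t ∈ Icc a b, c ≤ f' t) :
    f a + c * (b - a) ≤ f b := by
  have hmono : MonotoneOn (fun t => f t - c * t) (Icc a b) := by
    apply monotoneOn_of_deriv_nonneg (convex_Icc a b)
    · exact fun t ht => ((hf t ht).continuousAt.continuousWithinAt).sub
        ((continuous_const.mul continuous_id).continuousWithinAt)
    · intro t ht
      rw [interior_Icc] at ht
      exact (((hf t (Ioo_subset_Icc_self ht)).sub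
        ((hasDerivAt_id t).const_mul c)).differentiableAt).differentiableWithinAt
    · intro t ht
      rw [interior_Icc] at ht
      have hd : HasDerivAt (fun u => f u - c * u) (f' t - c) t :=
        (hf t (Ioo_subset_Icc_self ht)).sub
          (by simpa using (hasDerivAt_id t).const_mul c)
      rw [hd.deriv]
      have := hc t (Ioo_subset_Icc_self ht)
      linarith
  have h2 := hmono (left_mem_Icc.2 hab) (right_mem_Icc.2 hab) hab
  simp only at h2
  have : c * (b - a) = c * b - c * a := by ring
  linarith

private lemma aux_le {f f' : ℝ → ℝ} {a b c : ℝ} (hab : a ≤ b)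
    (hf : ∀ t ∈ Icc a b, HasDerivAt f (f' t) t)
    (hc : ∀ t ∈ Icc a b, f' t ≤ -c) :
    f b ≤ f a - c * (b - a) := by
  have := aux_ge (f := fun t => -f t) (f' := fun t => -(f' t)) (c := c) hab
    (fun t ht => (hf t ht).neg)
    (fun t ht => by show c ≤ -f' t; have := hc t ht; linarith)
  have h2 : -f a + c * (b - a) ≤ -f b := this
  linarith

/-- Fixed-time convergence estimate (Proposition 1): if the nonnegative,
nonincreasing, differentiable function `V` satisfies
`V' t ≤ -α₁ V t ^ (1 - γ₁/2) - α₂ V t ^ (1 - γ₂/2)` whenever `V t > 0`, with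
`α₁, α₂ > 0`, `γ₁ ∈ (0,1)`, `γ₂ < 0`, then `V t = 0` for all
`t ≥ 2/(α₁ γ₁) + 2/(α₂ |γ₂|)`, uniformly in the initial value `V 0`. -/
theorem fixed_time_two_term {α₁ α₂ γ₁ γ₂ : ℝ}
    (hα₁ : 0 < α₁) (hα₂ : 0 < α₂) (hγ₁0 : 0 < γ₁) (hγ₁1 : γ₁ < 1) (hγ₂ : γ₂ < 0)
    (V V' : ℝ → ℝ)
    (hderiv : ∀ t, 0 ≤ t → HasDerivAt V (V' t) t)
    (hnonneg : ∀ t, 0 ≤ t → 0 ≤ V t)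
    (hmono : ∀ s t, 0 ≤ s → s ≤ t → V t ≤ V s)
    (hineq : ∀ t, 0 ≤ t → 0 < V t →
      V' t ≤ -α₁ * V t ^ (1 - γ₁ / 2) - α₂ * V t ^ (1 - γ₂ / 2)) :
    ∀ t, 2 / (α₁ * γ₁) + 2 / (α₂ * |γ₂|) ≤ t → V t = 0 := by
  intro t ht
  set T₁ := 2 / (α₁ * γ₁) with hT₁def
  set T₂ := 2 / (α₂ * |γ₂|) with hT₂def
  have hγ₂' : 0 < |γ₂| := abs_pos.2 (ne_of_lt hγ₂)
  have habs : |γ₂| = -γ₂ := abs_of_neg hγ₂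
  have hT₁ : 0 < T₁ := div_pos two_pos (mul_pos hα₁ hγ₁0)
  have hT₂ : 0 < T₂ := div_pos two_pos (mul_pos hα₂ hγ₂')
  have ht0 : (0:ℝ) ≤ t := by linarith
  -- Step 1 : V T₂ ≤ 1
  have step1 : V T₂ ≤ 1 := by
    by_contra hcon
    push_neg at hcon
    have hVpos : ∀ s ∈ Icc (0:ℝ) T₂, 1 < V s := fun s hs =>
      lt_of_lt_of_le hcon (hmono s T₂ hs.1 hs.2)
    set W' : ℝ → ℝ := fun s => V' s * (γ₂/2) * V s ^ (γ₂/2 - 1) with hW'def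
    have hWd : ∀ s ∈ Icc (0:ℝ) T₂,
        HasDerivAt (fun u => V u ^ (γ₂/2)) (W' s) s := fun s hs =>
      (hderiv s hs.1).rpow_const (Or.inl (lt_trans one_pos (hVpos s hs)).ne')
    have hbound : ∀ s ∈ Icc (0:ℝ) T₂, α₂ * |γ₂| / 2 ≤ W' s := by
      intro s hs
      have hV1 : 1 < V s := hVpos s hs
      have hVp : (0:ℝ) < V s := lt_trans one_pos hV1
      have hle := hineq s hs.1 hVp
      have h1 : (0:ℝ) ≤ α₁ * V s ^ (1 - γ₁/2) :=
        mul_nonneg hα₁.le (Real.rpow_pos_of_pos hVp _).le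
      have hle2 : V' s ≤ -α₂ * V s ^ (1 - γ₂/2) := by linarith
      have hBpos : (0:ℝ) < V s ^ (γ₂/2 - 1) := Real.rpow_pos_of_pos hVp _
      have hneg : (γ₂/2) * V s ^ (γ₂/2 - 1) ≤ 0 :=
        (mul_nonpos_iff.2 (Or.inr ⟨by linarith, hBpos.le⟩))
      have hprod : V s ^ (1 - γ₂/2) * V s ^ (γ₂/2 - 1) = 1 := by
        rw [← Real.rpow_add hVp]; norm_num
      have key := mul_le_mul_of_nonpos_right hle2 hneg
      calc α₂ * |γ₂| / 2
          = (-α₂ * V s ^ (1 - γ₂/2)) * ((γ₂/2) * V s ^ (γ₂/2 - 1)) := by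
            rw [habs]; linear_combination ((α₂ * γ₂) / 2) * hprod
        _ ≤ V' s * ((γ₂/2) * V s ^ (γ₂/2 - 1)) := key
        _ = W' s := by rw [hW'def]; ring
    have hconc := aux_ge hT₂.le hWd hbound
    have hc1 : α₂ * |γ₂| / 2 * (T₂ - 0) = 1 := by
      rw [hT₂def]; field_simp; ring
    have hconc' : V 0 ^ (γ₂/2) + 1 ≤ V T₂ ^ (γ₂/2) := by
      have : (fun u => V u ^ (γ₂/2)) 0 + 1 ≤ (fun u => V u ^ (γ₂/2)) T₂ := by
        rw [← hc1]; exact hconc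
      simpa using this
    have hW0 : (0:ℝ) < V 0 ^ (γ₂/2) :=
      Real.rpow_pos_of_pos (lt_trans one_pos (hVpos 0 ⟨le_refl _, hT₂.le⟩)) _
    have hWT : V T₂ ^ (γ₂/2) < 1 :=
      Real.rpow_lt_one_of_one_lt_of_neg hcon (by linarith)
    linarith
  -- Step 2
  by_contra hne
  have hVt : 0 < V t := lt_of_le_of_ne (hnonneg t ht0) (Ne.symm hne)
  have hIsub : ∀ s ∈ Icc T₂ (T₂ + T₁), 0 < V s := by
    intro s hs
    have hs0 : (0:ℝ) ≤ s := le_trans hT₂.le hs.1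
    have hst : s ≤ t := le_trans hs.2 (by linarith)
    exact lt_of_lt_of_le hVt (hmono s t hs0 hst)
  set U' : ℝ → ℝ := fun s => V' s * (γ₁/2) * V s ^ (γ₁/2 - 1) with hU'def
  have hUd : ∀ s ∈ Icc T₂ (T₂ + T₁),
      HasDerivAt (fun u => V u ^ (γ₁/2)) (U' s) s := fun s hs =>
    (hderiv s (le_trans hT₂.le hs.1)).rpow_const (Or.inl (hIsub s hs).ne')
  have hbound : ∀ s ∈ Icc T₂ (T₂ + T₁), U' s ≤ -(α₁ * γ₁ / 2) := by
    intro s hs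
    have hVp := hIsub s hs
    have hs0 : (0:ℝ) ≤ s := le_trans hT₂.le hs.1
    have hle := hineq s hs0 hVp
    have h2 : (0:ℝ) ≤ α₂ * V s ^ (1 - γ₂/2) :=
      mul_nonneg hα₂.le (Real.rpow_pos_of_pos hVp _).le
    have hle2 : V' s ≤ -α₁ * V s ^ (1 - γ₁/2) := by linarith
    have hBpos : (0:ℝ) < V s ^ (γ₁/2 - 1) := Real.rpow_pos_of_pos hVp _
    have hpos : (0:ℝ) ≤ (γ₁/2) * V s ^ (γ₁/2 - 1) :=
      mul_nonneg (by linarith) hBpos.le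
    have hprod : V s ^ (1 - γ₁/2) * V s ^ (γ₁/2 - 1) = 1 := by
      rw [← Real.rpow_add hVp]; norm_num
    have key := mul_le_mul_of_nonneg_right hle2 hpos
    calc U' s = V' s * ((γ₁/2) * V s ^ (γ₁/2 - 1)) := by rw [hU'def]; ring
      _ ≤ (-α₁ * V s ^ (1 - γ₁/2)) * ((γ₁/2) * V s ^ (γ₁/2 - 1)) := key
      _ = -(α₁ * γ₁ / 2) := by linear_combination (-(α₁ * γ₁) / 2) * hprod
  have hconc := aux_le (by linarith : T₂ ≤ T₂ + T₁) hUd hbound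
  have hc1 : α₁ * γ₁ / 2 * (T₂ + T₁ - T₂) = 1 := by
    have : T₂ + T₁ - T₂ = T₁ := by ring
    rw [this, hT₁def]; field_simp
  have hconc' : V (T₂ + T₁) ^ (γ₁/2) ≤ V T₂ ^ (γ₁/2) - 1 := by
    have : (fun u => V u ^ (γ₁/2)) (T₂+T₁) ≤ (fun u => V u ^ (γ₁/2)) T₂ - 1 := by
      rw [← hc1]; exact hconc
    simpa using this
  have hUT₂ : V T₂ ^ (γ₁/2) ≤ 1 :=
    Real.rpow_le_one (hnonneg T₂ hT₂.le) step1 (by linarith)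
  have hUend : (0:ℝ) < V (T₂ + T₁) ^ (γ₁/2) :=
    Real.rpow_pos_of_pos (hIsub (T₂+T₁) ⟨by linarith, le_refl _⟩) _
  linarith
end
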